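/- Let u : [0, \infty) \to [0, \infty) be continuous, and let r > 0, M \geq 1, B \geq 0, \alpha < 0 and 0 < q < 1 with M B < 2(1 - q)|\alpha|. Suppose that for every t_1 \geq 0 such that u(\tau) \leq r^2 for all \tau \in [0, t_1], the estimate u(t_1) \leq M\big( e^{2\alpha t_1} u(0) + B \int_0^{t_1} e^{2\alpha(t_1-\tau)} u(\tau)\,d\tau \big) holds. If u(0) \leq q r^2 / M, then u(t) \leq r^2 for all t \geq 0, i.e., u never escapes the ball of radius r^2. -/

import Mathlib

/-! While `u ≤ r²` on `[0, t]`, the integral estimate gives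
`u t ≤ M u(0) + M B r² / (2|α|) < q r² + (1 - q) r² = r²`, with strict inequality; so `u` can never
reach the level `r²` from below, by a continuous-induction (first exit time) argument. -/

open Set Real

/- At the first exit time `t₁` from `(-∞, c]`, continuity gives `u ≤ c` on `[a, t₁]`, hence
`u t₁ < c`; yet `u t₁ ≥ c` because `t₁` is a limit of exit points. -/
theorem ContinuousOn.forall_le_of_forall_Icc_le_imp_lt {u : ℝ → ℝ} {a c : ℝ}
    (hu : ContinuousOn u (Ici a)) (ha : u a ≤ c)
    (hstep : ∀ t, a ≤ t → (∀ τ ∈ Icc a t, u τ ≤ c) → u t < c) :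
    ∀ t, a ≤ t → u t ≤ c := by
  by_contra! ⟨t, hat, hct⟩
  set S := {t | a ≤ t ∧ c < u t}
  have hS : S.Nonempty := ⟨t, hat, hct⟩
  have hSbdd : BddBelow S := ⟨a, fun _ hx => hx.1⟩
  set t₁ := sInf S
  have ha₁ : a ≤ t₁ := le_csInf hS fun _ hx => hx.1
  have hbefore : ∀ τ ∈ Ico a t₁, u τ ≤ c := fun τ hτ =>
    not_lt.1 fun h => (csInf_le hSbdd ⟨hτ.1, h⟩).not_gt hτ.2
  have hupto : ∀ τ ∈ Icc a t₁, u τ ≤ c := by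
    rcases ha₁.eq_or_lt with h | h
    · rintro τ ⟨h₁, h₂⟩
      rwa [le_antisymm (h₂.trans h.ge) h₁]
    · have hK : IsClosed (Ici a ∩ u ⁻¹' Iic c) :=
        hu.preimage_isClosed_of_isClosed isClosed_Ici isClosed_Iic
      rw [← closure_Ico h.ne]
      exact fun τ hτ => (hK.closure_subset_iff.2 (fun x hx => ⟨hx.1, hbefore x hx⟩) hτ).2
  have hexit : c ≤ u t₁ :=
    ((hu.preimage_isClosed_of_isClosed isClosed_Ici isClosed_Ici).closure_subset_iff.2
      (fun x hx => ⟨hx.1, hx.2.le⟩) (csInf_mem_closure hS hSbdd)).2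
  exact (hstep _ ha₁ hupto).not_ge hexit

theorem integral_exp_mul_sub (β t : ℝ) (hβ : β ≠ 0) :
    ∫ τ in (0 : ℝ)..t, exp (β * (t - τ)) = β⁻¹ * (exp (β * t) - 1) := by
  rw [intervalIntegral.integral_comp_sub_left (fun s => exp (β * s)),
    intervalIntegral.integral_comp_mul_left (fun s => exp s) hβ, integral_exp]
  simp

theorem integral_exp_mul_sub_le {β : ℝ} (hβ : β < 0) (t : ℝ) :
    ∫ τ in (0 : ℝ)..t, exp (β * (t - τ)) ≤ -β⁻¹ := by
  rw [integral_exp_mul_sub β t hβ.ne]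
  nlinarith [exp_pos (β * t), inv_lt_zero.2 hβ]

theorem integral_exp_mul_sub_mul_le {f : ℝ → ℝ} {β t K : ℝ} (hβ : β < 0) (ht : 0 ≤ t)
    (hK : 0 ≤ K) (hf : ContinuousOn f (Icc 0 t)) (hfK : ∀ τ ∈ Icc 0 t, f τ ≤ K) :
    ∫ τ in (0 : ℝ)..t, exp (β * (t - τ)) * f τ ≤ K * -β⁻¹ := by
  have hexp : Continuous fun τ => exp (β * (t - τ)) := by fun_prop
  calc ∫ τ in (0 : ℝ)..t, exp (β * (t - τ)) * f τ
      ≤ ∫ τ in (0 : ℝ)..t, exp (β * (t - τ)) * K := by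
        refine intervalIntegral.integral_mono_on ht ?_ ?_ fun τ hτ =>
          mul_le_mul_of_nonneg_left (hfK τ hτ) (exp_pos _).le
        · exact (hexp.continuousOn.mul hf).intervalIntegrable_of_Icc ht
        · exact (hexp.mul continuous_const).intervalIntegrable _ _
    _ = K * ∫ τ in (0 : ℝ)..t, exp (β * (t - τ)) := by
        rw [intervalIntegral.integral_mul_const, mul_comm]
    _ ≤ K * -β⁻¹ := mul_le_mul_of_nonneg_left (integral_exp_mul_sub_le hβ t) hK

theorem no_finite_escape_time_general
    (u : ℝ → ℝ) (hu : ContinuousOn u (Set.Ici 0))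
    (hnonneg : ∀ t, 0 ≤ t → 0 ≤ u t)
    (r M B α q : ℝ) (hr : 0 < r) (hM : 1 ≤ M) (hB : 0 ≤ B) (hα : α < 0)
    (hq1 : q < 1)
    (hsmall : M * B < 2 * (1 - q) * |α|)
    (hbound : ∀ t₁, 0 ≤ t₁ → (∀ τ ∈ Set.Icc (0:ℝ) t₁, u τ ≤ r ^ 2) →
      u t₁ ≤ M * (Real.exp (2 * α * t₁) * u 0 +
        B * ∫ τ in (0:ℝ)..t₁, Real.exp (2 * α * (t₁ - τ)) * u τ))
    (h0 : u 0 ≤ q * r ^ 2 / M) :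
    ∀ t, 0 ≤ t → u t ≤ r ^ 2 := by
  have hM₀ : 0 < M := by linarith
  have hr₂ : 0 < r ^ 2 := by positivity
  have hMu₀ : M * u 0 ≤ q * r ^ 2 := by rwa [le_div_iff₀' hM₀] at h0
  have hgain : M * B * -(2 * α)⁻¹ < 1 - q := by
    rw [abs_of_neg hα] at hsmall
    rw [mul_neg, ← div_eq_mul_inv, ← div_neg, div_lt_iff₀ (by linarith)]
    linarith
  refine hu.forall_le_of_forall_Icc_le_imp_lt ?_ fun t ht hle => ?_
  · calc u 0 ≤ M * u 0 := le_mul_of_one_le_left (hnonneg 0 le_rfl) hM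
      _ ≤ q * r ^ 2 := hMu₀
      _ ≤ r ^ 2 := by nlinarith
  have hI := integral_exp_mul_sub_mul_le (by linarith : 2 * α < 0) ht hr₂.le
    (hu.mono Icc_subset_Ici_self) hle
  have hdecay : exp (2 * α * t) * u 0 ≤ u 0 :=
    mul_le_of_le_one_left (hnonneg 0 le_rfl) (exp_le_one_iff.2 (by nlinarith))
  calc u t ≤ M * (exp (2 * α * t) * u 0 +
        B * ∫ τ in (0:ℝ)..t, exp (2 * α * (t - τ)) * u τ) := hbound t ht hle
    _ ≤ M * (u 0 + B * (r ^ 2 * -(2 * α)⁻¹)) := by gcongr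
    _ = M * u 0 + M * B * -(2 * α)⁻¹ * r ^ 2 := by ring
    _ < q * r ^ 2 + (1 - q) * r ^ 2 :=
        add_lt_add_of_le_of_lt hMu₀ (mul_lt_mul_of_pos_right hgain hr₂)
    _ = r ^ 2 := by ring

/-- **No finite escape time** (escape-time argument in the proof of Theorem 4 of the
paper). Let `u : [0,∞) → [0,∞)` be continuous, `r > 0`, `M ≥ 1`, `B ≥ 0`, `α < 0` and
`0 < q < 1` with `M B < 2(1-q)|α|`. Suppose that whenever `u(τ) ≤ r²` on `[0, t₁]`, the
integral estimate `u(t₁) ≤ M (e^{2αt₁} u(0) + B ∫₀^{t₁} e^{2α(t₁-τ)} u(τ) dτ)` holds.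
If `u(0) ≤ q r² / M`, then `u(t) ≤ r²` for all `t ≥ 0`. -/
theorem no_finite_escape_time
    (u : ℝ → ℝ) (hu : ContinuousOn u (Set.Ici 0))
    (hnonneg : ∀ t, 0 ≤ t → 0 ≤ u t)
    (r M B α q : ℝ) (hr : 0 < r) (hM : 1 ≤ M) (hB : 0 ≤ B) (hα : α < 0)
    (hq0 : 0 < q) (hq1 : q < 1)
    (hsmall : M * B < 2 * (1 - q) * |α|)
    (hbound : ∀ t₁, 0 ≤ t₁ → (∀ τ ∈ Set.Icc (0:ℝ) t₁, u τ ≤ r ^ 2) →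
      u t₁ ≤ M * (Real.exp (2 * α * t₁) * u 0 +
        B * ∫ τ in (0:ℝ)..t₁, Real.exp (2 * α * (t₁ - τ)) * u τ))
    (h0 : u 0 ≤ q * r ^ 2 / M) :
    ∀ t, 0 ≤ t → u t ≤ r ^ 2 :=
  no_finite_escape_time_general u hu hnonneg r M B α q hr hM hB hα hq1 hsmall hbound h0
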